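/- Let F : Sⁿ → ℝ be orthogonally invariant and differentiable at A ∈ Sⁿ. Then every orthogonal matrix U stabilizing A (i.e., UAUᵀ = A) also stabilizes ∇F(A): U ∇F(A) Uᵀ = ∇F(A). -/

import Mathlib

/-
Orthogonal invariance of `F` together with `UAUᵀ = A` gives
`F(A + B) = F(U (A + UᵀBU) Uᵀ) = F(A + UᵀBU)`, and `tr(G UᵀBU) = tr(UGUᵀ B)`, so `UGUᵀ` is
again a gradient of `F` at `A`. Gradients are unique: if `H` is symmetric and
`tr(HB) = o(‖B‖)` over symmetric `B`, testing on `B = tH` gives `‖H‖² = o(‖H‖)`, so `H = 0`.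
-/

open Matrix

/-- Frobenius norm of a matrix. -/
noncomputable def fnorm {n : ℕ} (B : Matrix (Fin n) (Fin n) ℝ) : ℝ :=
  Real.sqrt ((Bᵀ * B).trace)

/-- `G` is the gradient, with respect to the trace inner product on the space of
symmetric matrices, of `F : Sⁿ → ℝ` at the symmetric matrix `X`:
`F(X + B) = F(X) + ⟨G, B⟩ + o(‖B‖)` over symmetric perturbations `B`,
with `G` symmetric. -/
def HasSpecGradientAt {n : ℕ} (F : Matrix (Fin n) (Fin n) ℝ → ℝ)
    (X G : Matrix (Fin n) (Fin n) ℝ) : Prop :=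
  G.IsHermitian ∧ ∀ ε : ℝ, 0 < ε → ∃ δ : ℝ, 0 < δ ∧
    ∀ B : Matrix (Fin n) (Fin n) ℝ, B.IsHermitian → fnorm B ≤ δ →
      |F (X + B) - F X - (G * B).trace| ≤ ε * fnorm B

section Fnorm

variable {n : ℕ}

lemma trace_transpose_mul_self_nonneg (B : Matrix (Fin n) (Fin n) ℝ) :
    0 ≤ (Bᵀ * B).trace := by
  simpa only [conjTranspose_eq_transpose_of_trivial] using
    (posSemidef_conjTranspose_mul_self B).trace_nonneg

lemma fnorm_nonneg (B : Matrix (Fin n) (Fin n) ℝ) : 0 ≤ fnorm B :=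
  Real.sqrt_nonneg _

lemma fnorm_sq (B : Matrix (Fin n) (Fin n) ℝ) : fnorm B ^ 2 = (Bᵀ * B).trace :=
  Real.sq_sqrt (trace_transpose_mul_self_nonneg B)

lemma fnorm_eq_zero_iff {B : Matrix (Fin n) (Fin n) ℝ} : fnorm B = 0 ↔ B = 0 := by
  rw [fnorm, Real.sqrt_eq_zero (trace_transpose_mul_self_nonneg B),
    ← trace_conjTranspose_mul_self_eq_zero_iff, conjTranspose_eq_transpose_of_trivial]

lemma fnorm_pos {B : Matrix (Fin n) (Fin n) ℝ} (hB : B ≠ 0) : 0 < fnorm B :=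
  (fnorm_nonneg B).lt_of_ne (Ne.symm (mt fnorm_eq_zero_iff.mp hB))

lemma fnorm_smul (c : ℝ) (B : Matrix (Fin n) (Fin n) ℝ) :
    fnorm (c • B) = |c| * fnorm B := by
  rw [fnorm, fnorm, transpose_smul, smul_mul, Matrix.mul_smul, smul_smul, trace_smul, smul_eq_mul,
    Real.sqrt_mul (mul_self_nonneg c), Real.sqrt_mul_self_eq_abs]

lemma fnorm_transpose_conj {U : Matrix (Fin n) (Fin n) ℝ} (hU : U * Uᵀ = 1)
    (B : Matrix (Fin n) (Fin n) ℝ) : fnorm (Uᵀ * B * U) = fnorm B := by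
  rw [fnorm, fnorm, transpose_mul, transpose_mul, transpose_transpose]
  simp only [Matrix.mul_assoc]
  rw [← Matrix.mul_assoc U Uᵀ, hU, Matrix.one_mul, trace_mul_comm Uᵀ, Matrix.mul_assoc,
    Matrix.mul_assoc, hU, Matrix.mul_one]

end Fnorm

section Gradient

variable {n : ℕ} {F : Matrix (Fin n) (Fin n) ℝ → ℝ} {X : Matrix (Fin n) (Fin n) ℝ}

lemma eq_zero_of_forall_abs_trace_mul_le {H : Matrix (Fin n) (Fin n) ℝ} (hH : H.IsHermitian)
    (h : ∀ ε : ℝ, 0 < ε → ∃ δ : ℝ, 0 < δ ∧ ∀ B : Matrix (Fin n) (Fin n) ℝ, B.IsHermitian →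
      fnorm B ≤ δ → |(H * B).trace| ≤ ε * fnorm B) :
    H = 0 := by
  by_contra hH0
  have hpos := fnorm_pos hH0
  obtain ⟨δ, hδ, hB⟩ := h (fnorm H / 2) (half_pos hpos)
  set c := δ / fnorm H
  have hc : 0 < c := div_pos hδ hpos
  have hcH : c * fnorm H = δ := div_mul_cancel₀ δ hpos.ne'
  have hfB : fnorm (c • H) = δ := by
    rw [fnorm_smul, abs_of_pos hc, hcH]
  have htr : (H * (c • H)).trace = δ * fnorm H := by
    rw [Matrix.mul_smul, trace_smul, smul_eq_mul]
    nth_rw 1 [← (isHermitian_iff_isSymm.mp hH).eq]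
    rw [← fnorm_sq, pow_two, ← mul_assoc, hcH]
  have := hB (c • H) (hH.smul (IsSelfAdjoint.all c)) hfB.le
  rw [htr, hfB, abs_of_pos (mul_pos hδ hpos)] at this
  nlinarith

theorem HasSpecGradientAt.unique {G₁ G₂ : Matrix (Fin n) (Fin n) ℝ}
    (h₁ : HasSpecGradientAt F X G₁) (h₂ : HasSpecGradientAt F X G₂) : G₁ = G₂ := by
  refine sub_eq_zero.mp (eq_zero_of_forall_abs_trace_mul_le (h₁.1.sub h₂.1) fun ε hε => ?_)
  obtain ⟨δ₁, hδ₁, hB₁⟩ := h₁.2 (ε / 2) (half_pos hε)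
  obtain ⟨δ₂, hδ₂, hB₂⟩ := h₂.2 (ε / 2) (half_pos hε)
  refine ⟨min δ₁ δ₂, lt_min hδ₁ hδ₂, fun B hB hBδ => ?_⟩
  have e₁ := hB₁ B hB (hBδ.trans (min_le_left _ _))
  have e₂ := hB₂ B hB (hBδ.trans (min_le_right _ _))
  rw [abs_le] at e₁ e₂
  rw [sub_mul, trace_sub, abs_le]
  constructor <;> linarith

theorem HasSpecGradientAt.conj (hX : X.IsHermitian)
    (hinv : ∀ U Y : Matrix (Fin n) (Fin n) ℝ, U * Uᵀ = 1 → Y.IsHermitian →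
      F (U * Y * Uᵀ) = F Y)
    {G U : Matrix (Fin n) (Fin n) ℝ} (hG : HasSpecGradientAt F X G)
    (hU : U * Uᵀ = 1) (hUX : U * X * Uᵀ = X) : HasSpecGradientAt F X (U * G * Uᵀ) := by
  refine ⟨by simpa only [conjTranspose_eq_transpose_of_trivial] using
    isHermitian_mul_mul_conjTranspose U hG.1, fun ε hε => ?_⟩
  obtain ⟨δ, hδ, hB⟩ := hG.2 ε hε
  refine ⟨δ, hδ, fun B hBsymm hBδ => ?_⟩
  have hB' : (Uᵀ * B * U).IsHermitian := by
    simpa only [conjTranspose_eq_transpose_of_trivial, transpose_transpose] using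
      isHermitian_mul_mul_conjTranspose Uᵀ hBsymm
  have hFB : F (X + Uᵀ * B * U) = F (X + B) := by
    rw [← hinv U _ hU (hX.add hB'), Matrix.mul_add, Matrix.add_mul, hUX]
    simp only [← Matrix.mul_assoc, hU, Matrix.one_mul]
    rw [Matrix.mul_assoc, hU, Matrix.mul_one]
  have htr : (G * (Uᵀ * B * U)).trace = (U * G * Uᵀ * B).trace := by
    rw [← Matrix.mul_assoc, ← Matrix.mul_assoc, trace_mul_comm, ← Matrix.mul_assoc,
      Matrix.mul_assoc U G]
  have := hB _ hB' ((fnorm_transpose_conj hU B).trans_le hBδ)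
  rwa [hFB, htr, fnorm_transpose_conj hU] at this

end Gradient

theorem statement18 {n : ℕ} (F : Matrix (Fin n) (Fin n) ℝ → ℝ)
    (A G : Matrix (Fin n) (Fin n) ℝ) (hA : A.IsHermitian)
    (hinv : ∀ U X : Matrix (Fin n) (Fin n) ℝ, U * Uᵀ = 1 → X.IsHermitian →
      F (U * X * Uᵀ) = F X)
    (hG : HasSpecGradientAt F A G)
    (U : Matrix (Fin n) (Fin n) ℝ) (hU : U * Uᵀ = 1) (hUA : U * A * Uᵀ = A) :
    U * G * Uᵀ = G :=
  (hG.conj hA hinv hU hUA).unique hG
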